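/- arXiv:2302.04374 — 2 statements merged into one kernel-verified Lean document; each statement's English description precedes it below -/
import Mathlib

section
/- Let ι be a finite type, q̃ : ι → ℝ with q̃ i > 0 for all i, and let C be a convex set of functions q : ι → ℝ such that every q ∈ C satisfies q i > 0 for all i. Suppose q̂ ∈ C minimizes the unnormalized relative entropy to q̃ over C, i.e., D(q̂‖q̃) ≤ D(p‖q̃) for all p ∈ C. Then for every q ∈ C, the generalized Pythagorean inequality holds: D(q‖q̃) ≥ D(q‖q̂) + D(q̂‖q̃). -/
/-- The unnormalized relative entropy
`D(q‖q') = ∑ i, q i * log (q i / q' i) - ∑ i, (q i - q' i)`. -/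
noncomputable def unnormalizedRelEnt {ι : Type*} [Fintype ι] (q q' : ι → ℝ) : ℝ :=
  ∑ i, q i * Real.log (q i / q' i) - ∑ i, (q i - q' i)

/-! The three-point identity
`D(q‖q̃) = D(q‖q̂) + D(q̂‖q̃) + ∑ i, (q i - q̂ i) * log (q̂ i / q̃ i)`
reduces the inequality to the nonnegativity of the last sum. That sum is the derivative of
`D(·‖q̃)` at `q̂` in the direction `q - q̂`, which points into `C` by convexity, so it is
nonnegative because `q̂` minimizes `D(·‖q̃)` on `C`. -/

open Real

lemma hasDerivAt_mul_log_div {x c : ℝ} (hx : x ≠ 0) (hc : c ≠ 0) :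
    HasDerivAt (fun y ↦ y * log (y / c)) (log (x / c) + 1) x := by
  have h : (fun y ↦ y * log (y / c)) = fun y ↦ y * log y - log c * y := by
    funext y
    rcases eq_or_ne y 0 with rfl | hy
    · simp
    · rw [log_div hy hc]; ring
  rw [h, log_div hx hc, sub_add_eq_add_sub]
  simpa using (hasDerivAt_mul_log hx).fun_sub ((hasDerivAt_id x).const_mul (log c))

section
variable {ι : Type*} [Fintype ι]

lemma hasFDerivAt_unnormalizedRelEnt {p r : ι → ℝ} (hp : ∀ i, p i ≠ 0) (hr : ∀ i, r i ≠ 0) :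
    HasFDerivAt (fun p ↦ unnormalizedRelEnt p r)
      (∑ i, log (p i / r i) • ContinuousLinearMap.proj i : (ι → ℝ) →L[ℝ] ℝ) p := by
  have hent := HasFDerivAt.fun_sum (u := Finset.univ) fun i _ ↦
    (hasDerivAt_mul_log_div (hp i) (hr i)).comp_hasFDerivAt p (hasFDerivAt_apply (𝕜 := ℝ) i p)
  have hlin := HasFDerivAt.fun_sum (u := Finset.univ) fun i _ ↦
    (hasFDerivAt_apply (𝕜 := ℝ) i p).sub_const (r i)
  refine (hent.sub hlin).congr_fderiv ?_
  ext v
  simp [add_mul, Finset.sum_add_distrib]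

lemma unnormalizedRelEnt_eq_add_add_sum (q : ι → ℝ) {p r : ι → ℝ} (hp : ∀ i, p i ≠ 0)
    (hr : ∀ i, r i ≠ 0) :
    unnormalizedRelEnt q r = unnormalizedRelEnt q p + unnormalizedRelEnt p r
      + ∑ i, (q i - p i) * log (p i / r i) := by
  have hlog : ∀ i, q i * log (q i / r i) = q i * log (q i / p i) + q i * log (p i / r i) := by
    intro i
    rcases eq_or_ne (q i) 0 with hq | hq
    · simp [hq]
    · rw [← mul_add, ← log_mul (div_ne_zero hq (hp i)) (div_ne_zero (hp i) (hr i)),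
        div_mul_div_cancel₀ (hp i)]
  simp only [unnormalizedRelEnt, hlog, Finset.sum_add_distrib, sub_mul, Finset.sum_sub_distrib]
  ring

lemma sum_sub_mul_log_div_nonneg_of_isMinOn {C : Set (ι → ℝ)} (hC : Convex ℝ C)
    {p q r : ι → ℝ} (hp : p ∈ C) (hp₀ : ∀ i, p i ≠ 0) (hr : ∀ i, r i ≠ 0)
    (hmin : IsMinOn (fun p ↦ unnormalizedRelEnt p r) C p) (hq : q ∈ C) :
    0 ≤ ∑ i, (q i - p i) * log (p i / r i) := by
  have := hmin.localize.hasFDerivWithinAt_nonneg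
    (hasFDerivAt_unnormalizedRelEnt hp₀ hr).hasFDerivWithinAt
    (sub_mem_posTangentConeAt_of_segment_subset (hC.segment_subset hp hq))
  simpa [mul_comm] using this
end

/-- Generalized Pythagorean inequality for the Bregman projection (w.r.t. the
unnormalized relative entropy) onto a convex set of positive vectors. -/
theorem bregman_pythagorean
    {ι : Type*} [Fintype ι] (qtil : ι → ℝ) (hqtil : ∀ i, 0 < qtil i)
    (C : Set (ι → ℝ)) (hCconv : Convex ℝ C) (hCpos : ∀ p ∈ C, ∀ i, 0 < p i)
    (qhat : ι → ℝ) (hqhatC : qhat ∈ C)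
    (hmin : ∀ p ∈ C, unnormalizedRelEnt qhat qtil ≤ unnormalizedRelEnt p qtil)
    (q : ι → ℝ) (hqC : q ∈ C) :
    unnormalizedRelEnt q qhat + unnormalizedRelEnt qhat qtil
      ≤ unnormalizedRelEnt q qtil := by
  have hqtil₀ : ∀ i, qtil i ≠ 0 := fun i ↦ (hqtil i).ne'
  have hqhat₀ : ∀ i, qhat i ≠ 0 := fun i ↦ (hCpos qhat hqhatC i).ne'
  have hgrad := sum_sub_mul_log_div_nonneg_of_isMinOn hCconv hqhatC hqhat₀ hqtil₀
    (isMinOn_iff.mpr hmin) hqC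
  rw [unnormalizedRelEnt_eq_add_add_sum q hqhat₀ hqtil₀]
  linarith
end

section
/- Let ι be a nonempty finite type with cardinality n, let H be a positive integer, and let h : ι → {1,…,H} be a surjective layer assignment; for each layer b let n_b be the cardinality of {i : h i = b} (so n_b ≥ 1 and ∑_b n_b = n). Let p : ι → ℝ satisfy p i ≥ 0 for all i and ∑_{i : h i = b} p i = 1 for every layer b, and define the per-layer uniform vector û by û i = 1 / n_{h i}. Then ∑_i p i · log(p i / û i) ≤ H · log(n / H), where terms with p i = 0 contribute 0. -/
/-! Since `p log p ≤ 0` on `[0, 1]`, the relative entropy of a probability vector on a layer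
to the uniform one is at most `log n_b`; summing over layers, concavity of `log` turns
`∑_b log n_b` into `H log (∑_b n_b / H) = H log (n / H)`. -/

open Finset Real

theorem sum_mul_log_mul_card_le_log_card {α : Type*} (s : Finset α) (p : α → ℝ)
    (hp : ∀ i ∈ s, 0 ≤ p i) (hsum : ∑ i ∈ s, p i = 1) :
    ∑ i ∈ s, p i * log (p i * #s) ≤ log #s := by
  have hcard : (0 : ℝ) < #s := by
    exact_mod_cast (nonempty_of_sum_ne_zero (hsum.trans_ne one_ne_zero)).card_pos
  have hterm : ∀ i ∈ s, p i * log (p i * #s) ≤ p i * log #s := by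
    intro i hi
    rcases (hp i hi).eq_or_lt with hpi | hpi
    · simp [← hpi]
    have hpi_le_one : p i ≤ 1 := hsum ▸ single_le_sum hp hi
    rw [log_mul hpi.ne' hcard.ne', mul_add]
    linarith [mul_log_nonpos hpi.le hpi_le_one]
  calc ∑ i ∈ s, p i * log (p i * #s)
      ≤ ∑ i ∈ s, p i * log #s := sum_le_sum hterm
    _ = log #s := by rw [← sum_mul, hsum, one_mul]

theorem sum_log_le_card_mul_log_sum_div_card {α : Type*} (s : Finset α) (x : α → ℝ)
    (hx : ∀ i ∈ s, 0 < x i) :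
    ∑ i ∈ s, log (x i) ≤ #s * log ((∑ i ∈ s, x i) / #s) := by
  rcases s.eq_empty_or_nonempty with rfl | hs
  · simp
  have hcard : (0 : ℝ) < #s := by exact_mod_cast hs.card_pos
  have hjensen : ∑ i ∈ s, (#s : ℝ)⁻¹ • log (x i) ≤ log (∑ i ∈ s, (#s : ℝ)⁻¹ • x i) :=
    strictConcaveOn_log_Ioi.concaveOn.le_map_sum (fun _ _ => by positivity)
      (by simp [hcard.ne']) hx
  simp only [smul_eq_mul, ← mul_sum] at hjensen
  rw [div_eq_inv_mul]
  calc ∑ i ∈ s, log (x i) = #s * ((#s : ℝ)⁻¹ * ∑ i ∈ s, log (x i)) := by field_simp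
    _ ≤ #s * log ((#s : ℝ)⁻¹ * ∑ i ∈ s, x i) := by gcongr

theorem kl_to_layerwise_uniform_le_general
    {ι : Type*} [Fintype ι] (H : ℕ)
    (h : ι → Fin H) (hsurj : Function.Surjective h)
    (p : ι → ℝ) (hp : ∀ i, 0 ≤ p i)
    (hsum : ∀ b : Fin H, ∑ i ∈ Finset.univ.filter (fun i => h i = b), p i = 1) :
    ∑ i, p i * Real.log (p i /
        (1 / ((Finset.univ.filter (fun j => h j = h i)).card : ℝ)))
      ≤ (H : ℝ) * Real.log ((Fintype.card ι : ℝ) / (H : ℝ)) := by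
  set n : Fin H → ℕ := fun b => #{j | h j = b}
  have hn_pos : ∀ b ∈ univ, (0 : ℝ) < n b := fun b _ => by
    obtain ⟨i, rfl⟩ := hsurj b
    exact_mod_cast card_pos.2 ⟨i, by simp⟩
  rw [← sum_fiberwise univ h]
  calc ∑ b, ∑ i with h i = b, p i * log (p i / (1 / #{j | h j = h i}))
      = ∑ b, ∑ i with h i = b, p i * log (p i * n b) :=
        sum_congr rfl fun b _ => sum_congr rfl fun i hi => by
          rw [(mem_filter.1 hi).2, one_div, div_inv_eq_mul]
    _ ≤ ∑ b, log (n b : ℝ) :=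
        sum_le_sum fun b _ => sum_mul_log_mul_card_le_log_card _ p (fun i _ => hp i) (hsum b)
    _ ≤ H * log ((∑ b, (n b : ℝ)) / H) := by
        simpa using sum_log_le_card_mul_log_sum_div_card univ _ hn_pos
    _ = H * log (Fintype.card ι / H) := by
        rw [← Nat.cast_sum, ← card_eq_sum_card_fiberwise fun i _ => mem_univ (h i), card_univ]

/-- The KL bound used in equation (25) of the paper: for any vector `p` that is
a probability distribution on each of the `H` layers, the relative entropy to
the per-layer uniform vector `û i = 1 / n_{h i}` is at most `H * log (n / H)`. -/
theorem kl_to_layerwise_uniform_le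
    {ι : Type*} [Fintype ι] [Nonempty ι] (H : ℕ) (hH : 0 < H)
    (h : ι → Fin H) (hsurj : Function.Surjective h)
    (p : ι → ℝ) (hp : ∀ i, 0 ≤ p i)
    (hsum : ∀ b : Fin H, ∑ i ∈ Finset.univ.filter (fun i => h i = b), p i = 1) :
    ∑ i, p i * Real.log (p i /
        (1 / ((Finset.univ.filter (fun j => h j = h i)).card : ℝ)))
      ≤ (H : ℝ) * Real.log ((Fintype.card ι : ℝ) / (H : ℝ)) :=
  kl_to_layerwise_uniform_le_general H h hsurj p hp hsum
end
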